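/- arXiv:1702.08099 — 7 statements merged into one kernel-verified Lean document; each statement's English description precedes it below -/
import Mathlib

section
/- For every real number z > 0, the exponential integral E₁(z) = ∫_z^∞ e^{-t}/t dt satisfies E₁(z) < e^{-z} · ln(1 + 1/z). -/
/-!
Integrating by parts, `e^{-z} ln(1 + 1/z) = ∫_z^∞ e^{-t} (ln(1 + 1/t) + 1/(t(t+1))) dt`, since
`-e^{-t} ln(1 + 1/t)` is an antiderivative of the integrand vanishing at infinity. As
`1/t = 1/(t+1) + 1/(t(t+1))`, the pointwise bound `1/(t+1) < ln(1 + 1/t)` makes this integrand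
strictly larger than `e^{-t}/t` on `(z, ∞)`.
-/

open Real MeasureTheory Set Filter Topology

theorem MeasureTheory.setIntegral_lt_setIntegral_of_forall_lt {X : Type*} [MeasurableSpace X]
    {μ : Measure X} {s : Set X} {f g : X → ℝ} (hs : MeasurableSet s) (hμs : μ s ≠ 0)
    (hf : IntegrableOn f s μ) (hg : IntegrableOn g s μ) (hlt : ∀ x ∈ s, f x < g x) :
    ∫ x in s, f x ∂μ < ∫ x in s, g x ∂μ := by
  rw [← sub_pos, ← integral_sub hg hf]
  change 0 < ∫ x in s, (g - f) x ∂μ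
  rw [setIntegral_pos_iff_support_of_nonneg_ae _ (hg.sub hf)]
  · have hsupp : Function.support (g - f) ∩ s = s :=
      inter_eq_self_of_subset_right fun x hx => (sub_pos.2 (hlt x hx)).ne'
    rwa [hsupp, pos_iff_ne_zero]
  · exact (ae_restrict_iff' hs).2 (ae_of_all _ fun x hx => (sub_pos.2 (hlt x hx)).le)

namespace Real

theorem one_div_add_one_lt_log_one_add_one_div {t : ℝ} (ht : 0 < t) :
    1 / (t + 1) < log (1 + 1 / t) := by
  have hexp := exp_bound_div_one_sub_of_interval' (x := 1 / (t + 1)) (by positivity)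
    ((div_lt_one (by positivity)).2 (by linarith))
  have hrhs : 1 / (1 - 1 / (t + 1)) = 1 + 1 / t := by
    field_simp [ht.ne']
    ring
  rwa [hrhs, ← lt_log_iff_exp_lt (by positivity)] at hexp

theorem exp_neg_div_lt_exp_neg_mul_log_one_add_one_div_add {t : ℝ} (ht : 0 < t) :
    exp (-t) / t < exp (-t) * (log (1 + 1 / t) + 1 / (t * (t + 1))) := by
  have hsplit : 1 / t = 1 / (t + 1) + 1 / (t * (t + 1)) := by field_simp
  calc exp (-t) / t = exp (-t) * (1 / (t + 1) + 1 / (t * (t + 1))) := by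
        rw [div_eq_mul_one_div, hsplit]
    _ < exp (-t) * (log (1 + 1 / t) + 1 / (t * (t + 1))) := by
        gcongr
        exact one_div_add_one_lt_log_one_add_one_div ht

theorem hasDerivAt_neg_exp_neg_mul_log_one_add_one_div {t : ℝ} (ht : 0 < t) :
    HasDerivAt (fun x => -(exp (-x) * log (1 + 1 / x)))
      (exp (-t) * (log (1 + 1 / t) + 1 / (t * (t + 1)))) t := by
  have hexp : HasDerivAt (fun x => exp (-x)) (-exp (-t)) t := by
    simpa using (hasDerivAt_neg t).exp
  have hlog : HasDerivAt (fun x => log (1 + 1 / x)) (-(t ^ 2)⁻¹ / (1 + 1 / t)) t := by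
    have hinv : HasDerivAt (fun x => 1 + 1 / x) (-(t ^ 2)⁻¹) t := by
      simpa [one_div] using (hasDerivAt_inv ht.ne').const_add 1
    exact hinv.log (by positivity)
  refine (hexp.mul hlog).neg.congr_deriv ?_
  field_simp
  ring

theorem tendsto_neg_exp_neg_mul_log_one_add_one_div_atTop :
    Tendsto (fun x => -(exp (-x) * log (1 + 1 / x))) atTop (𝓝 0) := by
  have hlog : Tendsto (fun x : ℝ => log (1 + 1 / x)) atTop (𝓝 0) := by
    have hinv : Tendsto (fun x : ℝ => 1 + 1 / x) atTop (𝓝 (1 + 0)) :=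
      tendsto_const_nhds.add (tendsto_const_nhds.div_atTop tendsto_id)
    rw [add_zero] at hinv
    simpa only [log_one, Function.comp_def] using (continuousAt_log one_ne_zero).tendsto.comp hinv
  simpa using (tendsto_exp_neg_atTop_nhds_zero.mul hlog).neg

theorem integrableOn_exp_neg_mul_log_one_add_one_div_add {z : ℝ} (hz : 0 < z) :
    IntegrableOn (fun t => exp (-t) * (log (1 + 1 / t) + 1 / (t * (t + 1)))) (Ioi z) :=
  integrableOn_Ioi_deriv_of_nonneg'
    (fun _ hx => hasDerivAt_neg_exp_neg_mul_log_one_add_one_div (hz.trans_le hx))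
    (fun x hx => by
      have hx0 : 0 < x := hz.trans hx
      exact ((div_pos (exp_pos _) hx0).trans
        (exp_neg_div_lt_exp_neg_mul_log_one_add_one_div_add hx0)).le)
    tendsto_neg_exp_neg_mul_log_one_add_one_div_atTop

theorem integral_Ioi_exp_neg_mul_log_one_add_one_div_add {z : ℝ} (hz : 0 < z) :
    ∫ t in Ioi z, exp (-t) * (log (1 + 1 / t) + 1 / (t * (t + 1))) =
      exp (-z) * log (1 + 1 / z) := by
  rw [integral_Ioi_of_hasDerivAt_of_tendsto'
    (fun _ hx => hasDerivAt_neg_exp_neg_mul_log_one_add_one_div (hz.trans_le hx))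
    (integrableOn_exp_neg_mul_log_one_add_one_div_add hz)
    tendsto_neg_exp_neg_mul_log_one_add_one_div_atTop]
  ring

end Real

/-- For every real `z > 0`, the exponential integral `E₁(z) = ∫_z^∞ e^{-t}/t dt`
satisfies `E₁(z) < e^{-z} * ln (1 + 1/z)`. -/
theorem exp_integral_lt (z : ℝ) (hz : 0 < z) :
    (∫ t in Set.Ioi z, Real.exp (-t) / t) < Real.exp (-z) * Real.log (1 + 1 / z) := by
  have hmajorant := integrableOn_exp_neg_mul_log_one_add_one_div_add hz
  have hlt : ∀ t ∈ Ioi z, exp (-t) / t < exp (-t) * (log (1 + 1 / t) + 1 / (t * (t + 1))) :=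
    fun t ht => exp_neg_div_lt_exp_neg_mul_log_one_add_one_div_add (hz.trans ht)
  have hint : IntegrableOn (fun t => exp (-t) / t) (Ioi z) := by
    have hmeas : Measurable fun t => exp (-t) / t := by fun_prop
    refine hmajorant.mono' hmeas.aestronglyMeasurable ?_
    filter_upwards [ae_restrict_mem measurableSet_Ioi] with t ht
    rw [norm_of_nonneg (div_pos (exp_pos _) (hz.trans ht)).le]
    exact (hlt t ht).le
  rw [← integral_Ioi_exp_neg_mul_log_one_add_one_div_add hz]
  exact setIntegral_lt_setIntegral_of_forall_lt measurableSet_Ioi (by simp) hint hmajorant hlt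
end

section
/- Let h be a nonnegative real-valued random variable with E[h] = 1 and E[h²] < ∞, and let ρ ∈ (0, 1/E[h]) be a real number. Then log₂(1 + ρ·E[h]) + log₂(E[1/(1 + ρh)]) ≤ (log₂ e) · E[h²/(1 + ρh)] · ρ² ≤ (log₂ e) · E[h²] · ρ². -/
open Real MeasureTheory

/-! Expanding `1 / (1 + ρh) = 1 - ρh + ρ² h² / (1 + ρh)` and taking expectations gives
`E[1/(1+ρh)] = 1 - ρ + ρ² E[h²/(1+ρh)]` when `E[h] = 1`. Applying `ln x ≤ x - 1` to both
`1 + ρ` and this expectation, the linear terms `ρ` and `-ρ` cancel and only `ρ² E[h²/(1+ρh)]`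
survives; finally `h²/(1+ρh) ≤ h²` since `ρh ≥ 0`. -/

theorem one_div_one_add_mul_eq {K : Type*} [Field K] {ρ t : K} (ht : 1 + ρ * t ≠ 0) :
    1 / (1 + ρ * t) = 1 - ρ * t + ρ ^ 2 * (t ^ 2 / (1 + ρ * t)) := by
  field_simp
  ring

theorem integral_one_div_one_add_mul {Ω : Type*} [MeasurableSpace Ω] {μ : Measure Ω}
    [IsProbabilityMeasure μ] {h : Ω → ℝ} {ρ : ℝ} (hden : ∀ ω, 1 + ρ * h ω ≠ 0)
    (hInt : Integrable h μ) (hInt' : Integrable (fun ω => h ω ^ 2 / (1 + ρ * h ω)) μ) :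
    ∫ ω, 1 / (1 + ρ * h ω) ∂μ
      = 1 - ρ * ∫ ω, h ω ∂μ + ρ ^ 2 * ∫ ω, h ω ^ 2 / (1 + ρ * h ω) ∂μ := by
  have hlin : Integrable (fun ω => 1 - ρ * h ω) μ := (integrable_const 1).sub (hInt.const_mul ρ)
  simp_rw [one_div_one_add_mul_eq (hden _)]
  rw [integral_add hlin (hInt'.const_mul _),
    integral_sub (integrable_const 1) (hInt.const_mul ρ), integral_const_mul,
    integral_const_mul, integral_const, probReal_univ, one_smul]

theorem Real.log_one_add_add_log_one_sub_add_le {x c : ℝ} (hx : 0 < 1 + x)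
    (hc : 0 < 1 - x + c) : log (1 + x) + log (1 - x + c) ≤ c := by
  linarith [log_le_sub_one_of_pos hx, log_le_sub_one_of_pos hc]

theorem Real.logb_add_logb_le_logb_exp_one_mul {b x y c : ℝ} (hb : 1 < b)
    (hxy : log x + log y ≤ c) : logb b x + logb b y ≤ logb b (exp 1) * c := by
  rw [logb, logb, logb, log_exp, ← add_div, one_div_mul_eq_div]
  exact div_le_div_of_nonneg_right hxy (log_pos hb).le

theorem integral_sq_div_one_add_mul_le {Ω : Type*} [MeasurableSpace Ω] {μ : Measure Ω}
    {h : Ω → ℝ} {ρ : ℝ} (hρ : 0 ≤ ρ) (hpos : ∀ ω, 0 ≤ h ω)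
    (hInt2 : Integrable (fun ω => h ω ^ 2) μ)
    (hInt' : Integrable (fun ω => h ω ^ 2 / (1 + ρ * h ω)) μ) :
    ∫ ω, h ω ^ 2 / (1 + ρ * h ω) ∂μ ≤ ∫ ω, h ω ^ 2 ∂μ :=
  integral_mono hInt' hInt2 fun ω =>
    div_le_self (sq_nonneg _) (le_add_of_nonneg_right (mul_nonneg hρ (hpos ω)))

theorem low_snr_gap_general {Ω : Type*} [MeasurableSpace Ω] (μ : Measure Ω) [IsProbabilityMeasure μ]
    (h : Ω → ℝ) (hpos : ∀ ω, 0 ≤ h ω) (ρ : ℝ)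
    (hInt : Integrable h μ) (hmean : (∫ ω, h ω ∂μ) = 1)
    (hInt2 : Integrable (fun ω => (h ω) ^ 2) μ)
    (hInt4 : Integrable (fun ω => (h ω) ^ 2 / (1 + ρ * h ω)) μ)
    (hρ0 : 0 < ρ) (hρ1 : ρ < 1 / ∫ ω, h ω ∂μ) :
    Real.logb 2 (1 + ρ * ∫ ω, h ω ∂μ) + Real.logb 2 (∫ ω, 1 / (1 + ρ * h ω) ∂μ)
      ≤ Real.logb 2 (Real.exp 1) * (∫ ω, (h ω) ^ 2 / (1 + ρ * h ω) ∂μ) * ρ ^ 2 ∧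
    Real.logb 2 (Real.exp 1) * (∫ ω, (h ω) ^ 2 / (1 + ρ * h ω) ∂μ) * ρ ^ 2
      ≤ Real.logb 2 (Real.exp 1) * (∫ ω, (h ω) ^ 2 ∂μ) * ρ ^ 2 := by
  rw [hmean, div_one] at hρ1
  have hden : ∀ ω, 0 < 1 + ρ * h ω := fun ω => by have := hpos ω; positivity
  have hK : 0 ≤ ∫ ω, h ω ^ 2 / (1 + ρ * h ω) ∂μ :=
    integral_nonneg fun ω => div_nonneg (sq_nonneg _) (hden ω).le
  have hexpect := integral_one_div_one_add_mul (fun ω => (hden ω).ne') hInt hInt4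
  rw [hmean, mul_one] at hexpect
  refine ⟨?_, ?_⟩
  · rw [hmean, mul_one, hexpect, mul_assoc, mul_comm _ (ρ ^ 2)]
    refine logb_add_logb_le_logb_exp_one_mul one_lt_two ?_
    exact log_one_add_add_log_one_sub_add_le (by linarith) (by nlinarith)
  · have hlog2e : 0 ≤ logb 2 (exp 1) := logb_nonneg one_lt_two (one_le_exp zero_le_one)
    exact mul_le_mul_of_nonneg_right (mul_le_mul_of_nonneg_left
      (integral_sq_div_one_add_mul_le hρ0.le hpos hInt2 hInt4) hlog2e) (sq_nonneg ρ)

/-- Low-SNR gap bound: for a nonnegative random variable `h` with `E[h] = 1`,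
finite second moment, and `0 < ρ < 1/E[h]`,
`log₂(1 + ρ E[h]) + log₂ E[1/(1+ρh)] ≤ (log₂ e) E[h²/(1+ρh)] ρ² ≤ (log₂ e) E[h²] ρ²`. -/
theorem low_snr_gap {Ω : Type*} [MeasurableSpace Ω] (μ : Measure Ω) [IsProbabilityMeasure μ]
    (h : Ω → ℝ) (hpos : ∀ ω, 0 ≤ h ω) (ρ : ℝ)
    (hInt : Integrable h μ) (hmean : (∫ ω, h ω ∂μ) = 1)
    (hInt2 : Integrable (fun ω => (h ω) ^ 2) μ)
    (hInt3 : Integrable (fun ω => 1 / (1 + ρ * h ω)) μ)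
    (hInt4 : Integrable (fun ω => (h ω) ^ 2 / (1 + ρ * h ω)) μ)
    (hρ0 : 0 < ρ) (hρ1 : ρ < 1 / ∫ ω, h ω ∂μ) :
    Real.logb 2 (1 + ρ * ∫ ω, h ω ∂μ) + Real.logb 2 (∫ ω, 1 / (1 + ρ * h ω) ∂μ)
      ≤ Real.logb 2 (Real.exp 1) * (∫ ω, (h ω) ^ 2 / (1 + ρ * h ω) ∂μ) * ρ ^ 2 ∧
    Real.logb 2 (Real.exp 1) * (∫ ω, (h ω) ^ 2 / (1 + ρ * h ω) ∂μ) * ρ ^ 2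
      ≤ Real.logb 2 (Real.exp 1) * (∫ ω, (h ω) ^ 2 ∂μ) * ρ ^ 2 :=
  low_snr_gap_general μ h hpos ρ hInt hmean hInt2 hInt4 hρ0 hρ1
end

section
/- Let X be an exponentially distributed random variable with rate 1 (so X has density e^{−x} on (0,∞)), and let ρ ≥ 1. Then E[1/(X + 1/ρ)] = e^{1/ρ} E₁(1/ρ) < (1/ln 2) · log₂(1 + ρ), where E₁ is the exponential integral. Consequently E[log₂(1+ρX)] + log₂ E[1/(1+ρX)] < 0.48 + log₂(log₂(1+ρ)) + 1. -/
/-!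
Substituting `t = x + a` turns `∫₀^∞ e^{-x}/(x + a) dx` into `e^a E₁(a)`. Bounding the integrand
by `1/(x + a)` on `(0, 1]` and by `e^{-x}` on `(1, ∞)` gives `e^a E₁(a) ≤ ln(1 + 1/a) + e^{-1}`,
which for `a = 1/ρ` is `ln(1 + ρ) + e^{-1}`; since `(ln 2)² < 0.49` this is below
`ln(1 + ρ)/(ln 2)²`. Jensen's inequality for the concave `ln(1 + ρx)`, in the form of its tangent
line at the mean `E[X] = 1`, gives `E[ln(1 + ρX)] ≤ ln(1 + ρ)`, while
`E[1/(1 + ρX)] = e^{1/ρ} E₁(1/ρ)/ρ`. The last claim then reduces to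
`ln(1 + ρ) - ln ρ ≤ ln 2`, `ln(L + e^{-1}) ≤ ln(L/ln 2) + ln 2 - 1 + e^{-1}` for
`L = ln(1 + ρ) ≥ ln 2`, and `0.52 ln 2 + e^{-1} < 1`.
-/

open Real MeasureTheory Set

lemma log_le_log_add_sub_div {u v : ℝ} (hu : 0 < u) (hv : 0 < v) :
    log u ≤ log v + (u - v) / v := by
  have := log_le_sub_one_of_pos (div_pos hu hv)
  rw [log_div hu.ne' hv.ne'] at this
  rw [sub_div, div_self hv.ne']
  linarith

lemma exp_neg_one_lt : exp (-1) < 0.368 := by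
  rw [exp_neg, inv_lt_comm₀ (exp_pos 1) (by norm_num)]
  linarith [exp_one_gt_d9]

lemma setIntegral_Ioi_zero_comp_add_right (f : ℝ → ℝ) (a : ℝ) :
    ∫ x in Ioi 0, f (x + a) = ∫ t in Ioi a, f t := by
  have := (measurePreserving_add_right volume a).setIntegral_preimage_emb
    (measurableEmbedding_addRight a) f (Ioi a)
  rwa [preimage_add_const_Ioi, sub_self] at this

lemma integrableOn_mul_exp_neg_Ioi : IntegrableOn (fun x => x * exp (-x)) (Ioi 0) := by
  simpa [mul_comm, show (2 : ℝ) - 1 = 1 by norm_num] using GammaIntegral_convergent two_pos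

lemma integral_mul_exp_neg_Ioi : ∫ x in Ioi 0, x * exp (-x) = 1 := by
  simpa [mul_comm, show (2 : ℝ) - 1 = 1 by norm_num] using
    (Gamma_eq_integral two_pos).symm.trans Gamma_two

theorem integral_log_one_add_mul_mul_exp_neg_le {ρ : ℝ} (hρ : 0 ≤ ρ) :
    ∫ x in Ioi 0, log (1 + ρ * x) * exp (-x) ≤ log (1 + ρ) := by
  set c := ρ / (1 + ρ)
  have hconst := (integrableOn_exp_neg_Ioi 0).const_mul (log (1 + ρ) - c)
  have hlin := integrableOn_mul_exp_neg_Ioi.const_mul c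
  calc ∫ x in Ioi 0, log (1 + ρ * x) * exp (-x)
      ≤ ∫ x in Ioi 0, (log (1 + ρ) - c) * exp (-x) + c * (x * exp (-x)) := by
        refine integral_mono_of_nonneg ?_ (hconst.add hlin) ?_
        all_goals filter_upwards [ae_restrict_mem measurableSet_Ioi] with x (hx : 0 < x)
        · have : 0 ≤ log (1 + ρ * x) := log_nonneg (by nlinarith)
          positivity
        · have tangent := log_le_log_add_sub_div (u := 1 + ρ * x) (v := 1 + ρ)
            (by positivity) (by positivity)
          calc log (1 + ρ * x) * exp (-x)
              ≤ (log (1 + ρ) + (1 + ρ * x - (1 + ρ)) / (1 + ρ)) * exp (-x) := by gcongr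
            _ = (log (1 + ρ) - c) * exp (-x) + c * (x * exp (-x)) := by ring
    _ = log (1 + ρ) := by
        rw [integral_add hconst hlin, integral_const_mul, integral_const_mul,
          integral_exp_neg_Ioi_zero, integral_mul_exp_neg_Ioi]
        ring

theorem integral_one_div_add_mul_exp_neg (a : ℝ) :
    ∫ x in Ioi 0, 1 / (x + a) * exp (-x) = exp a * ∫ t in Ioi a, exp (-t) / t := by
  rw [← setIntegral_Ioi_zero_comp_add_right (fun t => exp (-t) / t), ← integral_const_mul]
  congr 1
  funext x
  rw [← mul_div_assoc, ← exp_add, show a + -(x + a) = -x by ring, one_div_mul_eq_div]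

lemma integrableOn_one_div_add_mul_exp_neg {a : ℝ} (ha : 0 < a) :
    IntegrableOn (fun x => 1 / (x + a) * exp (-x)) (Ioi 0) := by
  refine ((integrableOn_exp_neg_Ioi 0).const_mul a⁻¹).mono' (by fun_prop) ?_
  filter_upwards [ae_restrict_mem measurableSet_Ioi] with x (hx : 0 < x)
  rw [norm_of_nonneg (by positivity), one_div]
  gcongr
  linarith

lemma integral_one_div_add_mul_exp_neg_pos {a : ℝ} (ha : 0 < a) :
    0 < ∫ x in Ioi 0, 1 / (x + a) * exp (-x) := by
  have hpos : ∀ x ∈ Ioi (0 : ℝ), 0 < 1 / (x + a) * exp (-x) :=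
    fun x (hx : 0 < x) => by positivity
  rw [setIntegral_pos_iff_support_of_nonneg_ae
    ((ae_restrict_mem measurableSet_Ioi).mono fun x hx => (hpos x hx).le)
    (integrableOn_one_div_add_mul_exp_neg ha),
    inter_eq_right.mpr fun x hx => Function.mem_support.mpr (hpos x hx).ne', volume_Ioi]
  exact ENNReal.coe_lt_top

theorem integral_one_div_add_mul_exp_neg_le {a : ℝ} (ha : 0 < a) :
    ∫ x in Ioi 0, 1 / (x + a) * exp (-x) ≤ log (1 + 1 / a) + exp (-1) := by
  have hint := integrableOn_one_div_add_mul_exp_neg ha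
  rw [← Ioc_union_Ioi_eq_Ioi zero_le_one, setIntegral_union (Ioc_disjoint_Ioi le_rfl)
    measurableSet_Ioi (hint.mono_set Ioc_subset_Ioi_self)
    (hint.mono_set (Ioi_subset_Ioi zero_le_one))]
  gcongr ?_ + ?_
  · calc ∫ x in Ioc 0 1, 1 / (x + a) * exp (-x)
        ≤ ∫ x in Ioc 0 1, (x + a)⁻¹ := by
          refine setIntegral_mono_on (hint.mono_set Ioc_subset_Ioi_self) ?_ measurableSet_Ioc
            fun x ⟨hx, _⟩ => ?_
          · exact (ContinuousOn.integrableOn_Icc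
              (by fun_prop (disch := intro x hx; linarith [hx.1]))).mono_set Ioc_subset_Icc_self
          · rw [one_div]
            exact mul_le_of_le_one_right (by positivity) (exp_le_one_iff.mpr (by linarith))
      _ = log (1 + 1 / a) := by
          rw [← intervalIntegral.integral_of_le zero_le_one,
            intervalIntegral.integral_comp_add_right (fun x => x⁻¹),
            integral_inv_of_pos (by linarith) (by linarith)]
          congr 1
          field_simp
          ring
  · calc ∫ x in Ioi 1, 1 / (x + a) * exp (-x)
        ≤ ∫ x in Ioi 1, exp (-x) := by
          refine setIntegral_mono_on (hint.mono_set (Ioi_subset_Ioi zero_le_one))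
            (integrableOn_exp_neg_Ioi 1) measurableSet_Ioi fun x (hx : 1 < x) => ?_
          refine mul_le_of_le_one_left (exp_pos _).le ?_
          rw [div_le_one (by linarith)]
          linarith
      _ = exp (-1) := integral_exp_neg_Ioi 1

lemma integral_one_div_one_add_mul_mul {ρ : ℝ} (hρ : ρ ≠ 0) (g : ℝ → ℝ) (s : Set ℝ) :
    ∫ x in s, 1 / (1 + ρ * x) * g x = (∫ x in s, 1 / (x + 1 / ρ) * g x) / ρ := by
  rw [← integral_div]
  congr 1
  funext x
  rw [show 1 + ρ * x = ρ * (x + 1 / ρ) by field_simp; ring]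
  field_simp

lemma integral_logb_mul (b : ℝ) (f g : ℝ → ℝ) (s : Set ℝ) :
    ∫ x in s, logb b (f x) * g x = (∫ x in s, log (f x) * g x) / log b := by
  rw [← integral_div]
  simp only [logb, div_mul_eq_mul_div]

lemma log_one_add_add_exp_neg_one_lt {ρ : ℝ} (hρ : 1 ≤ ρ) :
    log (1 + ρ) + exp (-1) < 1 / log 2 * logb 2 (1 + ρ) := by
  have hL : log 2 ≤ log (1 + ρ) := log_le_log two_pos (by linarith)
  have hl := log_two_gt_d9
  have hsq : log 2 * log 2 < 0.4805 := by nlinarith [log_two_lt_d9]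
  rw [logb, one_div_mul_eq_div, div_div, lt_div_iff₀ (by positivity)]
  nlinarith [exp_neg_one_lt, exp_pos (-1)]

lemma div_log_two_add_logb_div_lt {ρ J M : ℝ} (hρ : 1 ≤ ρ) (hJ : J ≤ log (1 + ρ))
    (hM : 0 < M) (hM' : M ≤ log (1 + ρ) + exp (-1)) :
    J / log 2 + logb 2 (M / ρ) < 0.48 + logb 2 (logb 2 (1 + ρ)) + 1 := by
  set L := log (1 + ρ)
  have hl0 : 0 < log 2 := log_pos one_lt_two
  have hL : log 2 ≤ L := log_le_log two_pos (by linarith)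
  have hL0 : 0 < L := hl0.trans_le hL
  have hρ0 : 0 < ρ := by linarith
  have hJρ : L ≤ log 2 + log ρ := by
    rw [← log_mul two_ne_zero hρ0.ne']
    exact log_le_log (by positivity) (by linarith)
  have hMρ : log (M / ρ) ≤ log (L + exp (-1)) - log ρ := by
    rw [← log_div (by positivity) hρ0.ne']
    exact log_le_log (by positivity) (by gcongr)
  have hLe := log_le_log_add_sub_div (u := L + exp (-1)) (v := L / log 2)
    (by positivity) (by positivity)
  have hsplit : (L + exp (-1) - L / log 2) / (L / log 2)
      = log 2 - 1 + exp (-1) * (log 2 / L) := by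
    field_simp
    ring
  have he : exp (-1) * (log 2 / L) ≤ exp (-1) :=
    mul_le_of_le_one_right (exp_pos _).le ((div_le_one hL0).mpr hL)
  have key : J + log (M / ρ) < 1.48 * log 2 + log (L / log 2) := by
    rw [hsplit] at hLe
    linarith [log_two_lt_d9, exp_neg_one_lt]
  have hrhs : 0.48 + log (L / log 2) / log 2 + 1 = (1.48 * log 2 + log (L / log 2)) / log 2 := by
    field_simp
    ring
  rw [logb, logb, logb, ← add_div, hrhs]
  exact div_lt_div_of_pos_right key hl0

/-- For `X` exponential with rate 1 and `ρ ≥ 1`: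
`E[1/(X+1/ρ)] = e^{1/ρ} E₁(1/ρ) < (1/ln 2) log₂(1+ρ)`, and consequently
`E[log₂(1+ρX)] + log₂ E[1/(1+ρX)] < 0.48 + log₂(log₂(1+ρ)) + 1`. -/
theorem rayleigh_exp_integral_bound (ρ : ℝ) (hρ : 1 ≤ ρ) :
    (∫ x in Set.Ioi (0 : ℝ), (1 / (x + 1 / ρ)) * Real.exp (-x))
      = Real.exp (1 / ρ) * (∫ t in Set.Ioi (1 / ρ), Real.exp (-t) / t) ∧
    Real.exp (1 / ρ) * (∫ t in Set.Ioi (1 / ρ), Real.exp (-t) / t)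
      < (1 / Real.log 2) * Real.logb 2 (1 + ρ) ∧
    (∫ x in Set.Ioi (0 : ℝ), Real.logb 2 (1 + ρ * x) * Real.exp (-x))
        + Real.logb 2 (∫ x in Set.Ioi (0 : ℝ), (1 / (1 + ρ * x)) * Real.exp (-x))
      < 0.48 + Real.logb 2 (Real.logb 2 (1 + ρ)) + 1 := by
  have ha : 0 < 1 / ρ := by positivity
  have hM := integral_one_div_add_mul_exp_neg_le ha
  rw [one_div_one_div] at hM
  rw [← integral_one_div_add_mul_exp_neg]
  refine ⟨rfl, hM.trans_lt (log_one_add_add_exp_neg_one_lt hρ), ?_⟩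
  rw [integral_logb_mul, integral_one_div_one_add_mul_mul (by positivity)]
  exact div_log_two_add_logb_div_lt hρ (integral_log_one_add_mul_mul_exp_neg_le (by positivity))
    (integral_one_div_add_mul_exp_neg_pos ha) hM
end

section
/- Let H be an m×n real matrix, ρ > 0, A = −(Iₙ + ρHᵀH)^{-1}, and B = √ρ · Hᵀ(Iₘ + ρHHᵀ)^{-1}. Then AAᵀ + BBᵀ = (Iₙ + ρHᵀH)^{-1}. -/
open Matrix

lemma real_conjTranspose_eq_transpose {a b : Type*} (X : Matrix a b ℝ) : Xᴴ = Xᵀ := by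
  ext i j; simp [conjTranspose]

/-- MMSE error covariance decomposition: with `A = −(Iₙ + ρHᵀH)⁻¹` and
`B = √ρ Hᵀ(Iₘ + ρHHᵀ)⁻¹`, one has `AAᵀ + BBᵀ = (Iₙ + ρHᵀH)⁻¹`. -/
theorem mmse_covariance_decomposition {m n : ℕ} (H : Matrix (Fin m) (Fin n) ℝ)
    (ρ : ℝ) (hρ : 0 < ρ)
    (A : Matrix (Fin n) (Fin n) ℝ) (hA : A = -(1 + ρ • (Hᵀ * H))⁻¹)
    (B : Matrix (Fin n) (Fin m) ℝ) (hB : B = Real.sqrt ρ • (Hᵀ * (1 + ρ • (H * Hᵀ))⁻¹)) :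
    A * Aᵀ + B * Bᵀ = (1 + ρ • (Hᵀ * H))⁻¹ := by
  set M : Matrix (Fin n) (Fin n) ℝ := 1 + ρ • (Hᵀ * H) with hM
  set N : Matrix (Fin m) (Fin m) ℝ := 1 + ρ • (H * Hᵀ) with hN
  have hsq : Real.sqrt ρ * Real.sqrt ρ = ρ := Real.mul_self_sqrt hρ.le
  have hMpd : M.PosDef := by
    have h1 : ρ • (Hᵀ * H) = (Real.sqrt ρ • H)ᴴ * (Real.sqrt ρ • H) := by
      simp [real_conjTranspose_eq_transpose, smul_mul_assoc, mul_smul_comm, smul_smul, hsq]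
    exact Matrix.PosDef.add_posSemidef Matrix.PosDef.one
      (h1 ▸ posSemidef_conjTranspose_mul_self _)
  have hNpd : N.PosDef := by
    have h1 : ρ • (H * Hᵀ) = (Real.sqrt ρ • Hᵀ)ᴴ * (Real.sqrt ρ • Hᵀ) := by
      simp [real_conjTranspose_eq_transpose, smul_mul_assoc, mul_smul_comm, smul_smul, hsq]
    exact Matrix.PosDef.add_posSemidef Matrix.PosDef.one
      (h1 ▸ posSemidef_conjTranspose_mul_self _)
  have hMinv := hMpd.isUnit.invertible
  have hNinv := hNpd.isUnit.invertible
  have hMsym : Mᵀ = M := by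
    simp [hM, transpose_add, transpose_smul, transpose_mul]
  have hNsym : Nᵀ = N := by
    simp [hN, transpose_add, transpose_smul, transpose_mul]
  -- push-through: M * Hᵀ = Hᵀ * N
  have push : M * Hᵀ = Hᵀ * N := by
    simp only [hM, hN]
    simp [Matrix.add_mul, Matrix.mul_add, smul_mul_assoc, mul_smul_comm, Matrix.mul_assoc]
  have key : Hᵀ * N⁻¹ = M⁻¹ * Hᵀ := by
    have h2 := congrArg (fun X => M⁻¹ * X * N⁻¹) push
    simpa [Matrix.mul_assoc, Matrix.inv_mul_of_invertible, Matrix.mul_inv_of_invertible,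
      ← Matrix.mul_assoc] using h2
  have hMinvT : M⁻¹ᵀ = M⁻¹ := by rw [transpose_nonsing_inv, hMsym]
  have hNinvT : N⁻¹ᵀ = N⁻¹ := by rw [transpose_nonsing_inv, hNsym]
  rw [hA, hB]
  have hBB : (Real.sqrt ρ • (Hᵀ * N⁻¹)) * (Real.sqrt ρ • (Hᵀ * N⁻¹))ᵀ
      = M⁻¹ * (ρ • (Hᵀ * H)) * M⁻¹ := by
    rw [key]
    simp only [transpose_smul, transpose_mul, hMinvT, transpose_transpose]
    simp [smul_mul_assoc, mul_smul_comm, smul_smul, hsq, Matrix.mul_assoc]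
  rw [hBB]
  simp only [transpose_neg, hMinvT, neg_mul_neg]
  calc M⁻¹ * M⁻¹ + M⁻¹ * (ρ • (Hᵀ * H)) * M⁻¹
      = M⁻¹ * (1 + ρ • (Hᵀ * H)) * M⁻¹ := by
        rw [Matrix.mul_add, Matrix.mul_one, Matrix.add_mul]
    _ = M⁻¹ * M * M⁻¹ := by rw [← hM]
    _ = M⁻¹ := by rw [Matrix.inv_mul_of_invertible, Matrix.one_mul]
end

section
/- Let A ∈ ℂ^{r×m} and B ∈ ℂ^{r×q} be matrices with r ≥ q+1, and let c > 0. Let B B^H = V D V^H be an eigendecomposition with V unitary, where D is diagonal with exactly q possibly-nonzero eigenvalues. Then A^H (cI_r + B B^H)^{-1} A ⪰ (1/c) Ā^H Ā, where Ā ∈ ℂ^{(r−q)×m} consists of the r−q rows of V^H A corresponding to zero eigenvalues of B B^H. -/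
/-!
Conjugating by the unitary `V` diagonalises everything. With `M = Vᴴ A` and `dᵢ = Dᵢᵢ`,
`Aᴴ (cI + BBᴴ)⁻¹ A = Mᴴ diag((c + dᵢ)⁻¹) M` and `(1/c) Āᴴ Ā = Mᴴ diag(c⁻¹ 𝟙[i ∈ range e]) M`,
so the difference is `Mᴴ diag(wᵢ) M`. Since `D = Vᴴ BBᴴ V` is positive semidefinite, `dᵢ ≥ 0`,
hence `wᵢ = (c + dᵢ)⁻¹ ≥ 0` off the range of `e`, while on it `dᵢ = 0` and `wᵢ = c⁻¹ - c⁻¹ = 0`.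
-/

open Matrix ComplexOrder

namespace Matrix

variable {ι n m α : Type*} [DecidableEq n]

theorem IsDiag.smul_one_add_eq_diagonal [Semiring α] {D : Matrix n n α} (hD : D.IsDiag) (a : α) :
    a • 1 + D = diagonal fun i => a + D i i := by
  rw [smul_one_eq_diagonal]
  nth_rw 1 [← hD.diagonal_diag]
  exact diagonal_add _ _

variable [Fintype n]

theorem conjTranspose_submatrix_mul_submatrix [Fintype ι] [Semiring α] [StarRing α]
    (M : Matrix n m α) (e : ι ↪ n) :
    (M.submatrix e id)ᴴ * M.submatrix e id
      = Mᴴ * diagonal ((Set.range e).indicator 1 : n → α) * M := by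
  ext j k
  rw [mul_apply, mul_apply]
  simp only [mul_diagonal, conjTranspose_apply, submatrix_apply, id_eq]
  refine Fintype.sum_of_injective e e.injective _ _ (fun i hi => ?_) (fun i => ?_)
  · simp [Set.indicator_of_notMem hi]
  · simp

theorem inv_diagonal_of_ne_zero [Field α] {f : n → α} (hf : ∀ i, f i ≠ 0) :
    (diagonal f)⁻¹ = diagonal fun i => (f i)⁻¹ := by
  refine inv_eq_right_inv ?_
  rw [diagonal_mul_diagonal, ← diagonal_one]
  exact congrArg diagonal (funext fun i => mul_inv_cancel₀ (hf i))

section Unitary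

variable [CommRing α] [StarRing α] {U : Matrix n n α}

theorem mul_mul_conjTranspose_inv (hU : U ∈ unitaryGroup n α) (K : Matrix n n α) :
    (U * K * Uᴴ)⁻¹ = U * K⁻¹ * Uᴴ := by
  have hUUh : U * Uᴴ = 1 := mem_unitaryGroup_iff.mp hU
  have hUhU : Uᴴ * U = 1 := mem_unitaryGroup_iff'.mp hU
  rw [mul_inv_rev, mul_inv_rev, inv_eq_left_inv hUUh, inv_eq_left_inv hUhU, Matrix.mul_assoc]

theorem smul_one_add_mul_mul_conjTranspose (hU : U ∈ unitaryGroup n α) (a : α)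
    (K : Matrix n n α) : a • 1 + U * K * Uᴴ = U * (a • 1 + K) * Uᴴ := by
  have hUUh : U * Uᴴ = 1 := mem_unitaryGroup_iff.mp hU
  rw [Matrix.mul_add, Matrix.add_mul, Matrix.mul_smul, Matrix.mul_one, Matrix.smul_mul, hUUh]

end Unitary

end Matrix

theorem RCLike.inv_sub_indicator_nonneg {K ι : Type*} [RCLike K] {a : ι → K}
    (ha : ∀ i, 0 < a i) {c : ℝ} {s : Set ι} (hs : ∀ i ∈ s, a i = c) (i : ι) :
    0 ≤ (a i)⁻¹ - ((1 / c : ℝ) : K) * s.indicator 1 i := by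
  by_cases hi : i ∈ s
  · simp [hi, hs i hi]
  · rw [Set.indicator_of_notMem hi, mul_zero, sub_zero]
    exact (RCLike.inv_pos.2 (ha i)).le

theorem quadratic_form_lower_bound_general {r m q : ℕ} (c : ℝ) (hc : 0 < c)
    (A : Matrix (Fin r) (Fin m) ℂ) (B : Matrix (Fin r) (Fin q) ℂ)
    (V D : Matrix (Fin r) (Fin r) ℂ)
    (hV : V ∈ Matrix.unitaryGroup (Fin r) ℂ)
    (hD : D.IsDiag)
    (hBB : B * Bᴴ = V * D * Vᴴ)
    (e : Fin (r - q) ↪ Fin r)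
    (hzero : ∀ i, D (e i) (e i) = 0)
    (Abar : Matrix (Fin (r - q)) (Fin m) ℂ)
    (hAbar : ∀ i j, Abar i j = (Vᴴ * A) (e i) j) :
    (Aᴴ * ((c : ℂ) • (1 : Matrix (Fin r) (Fin r) ℂ) + B * Bᴴ)⁻¹ * A
      - ((1 / c : ℝ) : ℂ) • (Abarᴴ * Abar)).PosSemidef := by
  set M := Vᴴ * A
  have hDpsd : D.PosSemidef :=
    (Unitary.isUnit_coe (U := ⟨V, hV⟩)).posSemidef_star_right_conjugate_iff.1
      (hBB ▸ posSemidef_self_mul_conjTranspose B)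
  have hpos : ∀ i, 0 < (c : ℂ) + D i i := fun i =>
    add_pos_of_pos_of_nonneg (by exact_mod_cast hc) hDpsd.diag_nonneg
  have hlhs : Aᴴ * ((c : ℂ) • 1 + B * Bᴴ)⁻¹ * A
      = Mᴴ * diagonal (fun i => ((c : ℂ) + D i i)⁻¹) * M := by
    rw [hBB, smul_one_add_mul_mul_conjTranspose hV, hD.smul_one_add_eq_diagonal,
      mul_mul_conjTranspose_inv hV, inv_diagonal_of_ne_zero fun i => (hpos i).ne',
      conjTranspose_mul, conjTranspose_conjTranspose]
    simp only [M, Matrix.mul_assoc]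
  have hrhs : ((1 / c : ℝ) : ℂ) • (Abarᴴ * Abar)
      = Mᴴ * diagonal (((1 / c : ℝ) : ℂ) • (Set.range e).indicator 1 : Fin r → ℂ) * M := by
    rw [show Abar = M.submatrix e id from Matrix.ext hAbar,
      conjTranspose_submatrix_mul_submatrix, diagonal_smul, Matrix.mul_smul, Matrix.smul_mul]
  rw [hlhs, hrhs, ← Matrix.sub_mul, ← Matrix.mul_sub, diagonal_sub]
  refine (posSemidef_diagonal_iff.2 fun i => ?_).conjTranspose_mul_mul_same M
  refine RCLike.inv_sub_indicator_nonneg hpos ?_ i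
  rintro _ ⟨j, rfl⟩
  simp [hzero j]

/-- For `A ∈ ℂ^{r×m}`, `B ∈ ℂ^{r×q}` with `r ≥ q+1` and `c > 0`: if
`BBᴴ = V D Vᴴ` with `V` unitary and `D` diagonal whose entries at the `r-q`
indices picked out by `e` are zero, then
`Aᴴ(cI + BBᴴ)⁻¹A ⪰ (1/c) Āᴴ Ā` where `Ā` consists of the corresponding rows of `Vᴴ A`. -/
theorem quadratic_form_lower_bound {r m q : ℕ} (hr : q + 1 ≤ r) (c : ℝ) (hc : 0 < c)
    (A : Matrix (Fin r) (Fin m) ℂ) (B : Matrix (Fin r) (Fin q) ℂ)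
    (V D : Matrix (Fin r) (Fin r) ℂ)
    (hV : V ∈ Matrix.unitaryGroup (Fin r) ℂ)
    (hD : D.IsDiag)
    (hBB : B * Bᴴ = V * D * Vᴴ)
    (e : Fin (r - q) ↪ Fin r)
    (hzero : ∀ i, D (e i) (e i) = 0)
    (Abar : Matrix (Fin (r - q)) (Fin m) ℂ)
    (hAbar : ∀ i j, Abar i j = (Vᴴ * A) (e i) j) :
    (Aᴴ * ((c : ℂ) • (1 : Matrix (Fin r) (Fin r) ℂ) + B * Bᴴ)⁻¹ * A
      - ((1 / c : ℝ) : ℂ) • (Abarᴴ * Abar)).PosSemidef :=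
  quadratic_form_lower_bound_general c hc A B V D hV hD hBB e hzero Abar hAbar
end

section
/- Let W be a random n×n Hermitian positive definite complex matrix with E[W] and E[W^{-1}] finite, and let ρ ≥ 1. Then the gap G = E[log₂ det(I + ρW)] + log₂ det(E[(I + ρW)^{-1}]) satisfies G ≤ log₂ det((I + E[W]) · E[W^{-1}]). -/
/-!
`log det` is concave on positive definite matrices: applying `log x ≤ x - 1` to the eigenvalues
of `B^{-1/2} A B^{-1/2}` gives the tangent inequality `log det A ≤ log det B + tr (B⁻¹ A) - n`.
Integrated at `B = E[I + ρW]` it is Jensen's inequality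
`E[log det (I + ρW)] ≤ log det (I + ρE[W])`; evaluated at `A ≤ B`, where `tr (B⁻¹ (B - A)) ≥ 0`,
it shows that `log det` is monotone in the Loewner order. Pointwise `(I + ρW)⁻¹ ≤ (ρW)⁻¹`, so
`E[(I + ρW)⁻¹] ≤ ρ⁻¹ E[W⁻¹]`, and `I + ρE[W] ≤ ρ (I + E[W])` because `ρ ≥ 1`; the factors `ρⁿ`
and `ρ⁻ⁿ` then cancel.
-/

open Real MeasureTheory Matrix ComplexOrder

open scoped MatrixOrder

namespace Matrix

variable {Ω m n 𝕜 : Type*} [RCLike 𝕜]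

/-- `log det A`, with the determinant read through `RCLike.re`: it is real and positive when `A`
is positive definite. -/
noncomputable def logDet [Fintype n] [DecidableEq n] (A : Matrix n n 𝕜) : ℝ :=
  Real.log (RCLike.re A.det)

section LogDet

variable [Fintype n] [DecidableEq n] {A B : Matrix n n 𝕜}

lemma PosSemidef.trace_mul_nonneg (hA : A.PosSemidef) (hB : B.PosSemidef) :
    0 ≤ (A * B).trace := by
  obtain ⟨S, rfl⟩ := CStarAlgebra.nonneg_iff_eq_star_mul_self.mp hA.nonneg
  rw [← trace_mul_cycle]
  exact (hB.mul_mul_conjTranspose_same S).trace_nonneg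

namespace PosDef

lemma ofReal_re_det (hA : A.PosDef) : (RCLike.re A.det : 𝕜) = A.det := by
  obtain ⟨x, -, hx⟩ := RCLike.pos_iff_exists_ofReal.mp hA.det_pos
  rw [← hx, RCLike.ofReal_re]

lemma re_det_pos (hA : A.PosDef) : 0 < RCLike.re A.det :=
  (RCLike.pos_iff.mp hA.det_pos).1

lemma logDet_mul (hA : A.PosDef) (hB : B.PosDef) : logDet (A * B) = logDet A + logDet B := by
  rw [logDet, det_mul, ← hA.ofReal_re_det, ← hB.ofReal_re_det, ← RCLike.ofReal_mul,
    RCLike.ofReal_re, Real.log_mul hA.re_det_pos.ne' hB.re_det_pos.ne']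
  rfl

lemma logDet_inv (hA : A.PosDef) : logDet A⁻¹ = -logDet A := by
  have h := hA.inv.logDet_mul hA
  rw [nonsing_inv_mul _ (isUnit_iff_ne_zero.mpr hA.det_pos.ne'), logDet, det_one,
    RCLike.one_re, Real.log_one] at h
  linarith

lemma logDet_ofReal_smul (hA : A.PosDef) {c : ℝ} (hc : 0 < c) :
    logDet ((c : 𝕜) • A) = Fintype.card n * Real.log c + logDet A := by
  rw [logDet, det_smul, ← hA.ofReal_re_det, ← RCLike.ofReal_pow, ← RCLike.ofReal_mul,
    RCLike.ofReal_re, Real.log_mul (pow_pos hc _).ne' hA.re_det_pos.ne', Real.log_pow]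
  rfl

lemma logDet_le_re_trace_sub_card (hA : A.PosDef) :
    logDet A ≤ RCLike.re A.trace - Fintype.card n := by
  have hdet : RCLike.re A.det = ∏ i, hA.1.eigenvalues i := by
    rw [hA.1.det_eq_prod_eigenvalues, ← RCLike.ofReal_prod, RCLike.ofReal_re]
  have htr : RCLike.re A.trace = ∑ i, hA.1.eigenvalues i := by
    rw [hA.1.trace_eq_sum_eigenvalues, ← RCLike.ofReal_sum, RCLike.ofReal_re]
  rw [logDet, hdet, htr, Real.log_prod fun i _ => (hA.eigenvalues_pos i).ne']
  calc ∑ i, Real.log (hA.1.eigenvalues i) ≤ ∑ i, (hA.1.eigenvalues i - 1) :=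
        Finset.sum_le_sum fun i _ => Real.log_le_sub_one_of_pos (hA.eigenvalues_pos i)
    _ = _ := by simp [Finset.sum_sub_distrib]

/-- The tangent-line inequality expressing concavity of `logDet` at `B`. -/
lemma logDet_le_logDet_add_re_trace_inv_mul_sub_card (hA : A.PosDef) (hB : B.PosDef) :
    logDet A ≤ logDet B + RCLike.re (B⁻¹ * A).trace - Fintype.card n := by
  set T := CFC.sqrt B⁻¹
  have hTT : T * T = B⁻¹ := CFC.sqrt_mul_sqrt_self _ hB.inv.posSemidef.nonneg
  have hTstar : star T = T := (CFC.sqrt_nonneg B⁻¹).posSemidef.1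
  have hTunit : IsUnit T := isUnit_of_mul_isUnit_left (hTT ▸ hB.inv.isUnit)
  have hM : (star T * A * T).PosDef := (IsUnit.posDef_star_left_conjugate_iff hTunit).mpr hA
  have hdet : (star T * A * T).det = (B⁻¹ * A).det := by
    rw [hTstar, det_mul, det_mul, ← hTT, det_mul, det_mul]; ring
  have htr : (star T * A * T).trace = (B⁻¹ * A).trace := by
    rw [hTstar, trace_mul_cycle, hTT]
  have h := hM.logDet_le_re_trace_sub_card
  rw [logDet, hdet, ← logDet, hB.inv.logDet_mul hA, hB.logDet_inv, htr] at h
  linarith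

lemma logDet_mono (hA : A.PosDef) (hAB : A ≤ B) : logDet A ≤ logDet B := by
  have hB : B.PosDef := add_sub_cancel A B ▸ hA.add_posSemidef hAB
  have htr : 0 ≤ RCLike.re (B⁻¹ * (B - A)).trace :=
    (RCLike.nonneg_iff.mp (hB.inv.posSemidef.trace_mul_nonneg hAB)).1
  have hBB : (B⁻¹ * B).trace = Fintype.card n := by
    rw [nonsing_inv_mul _ (isUnit_iff_ne_zero.mpr hB.det_pos.ne'), trace_one]
  have h := hA.logDet_le_logDet_add_re_trace_inv_mul_sub_card hB
  rw [mul_sub, trace_sub, hBB, map_sub, RCLike.natCast_re] at htr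
  linarith

lemma inv_one_add_le_inv (hA : A.PosDef) : (1 + A)⁻¹ ≤ A⁻¹ := by
  have hAu : IsUnit A.det := isUnit_iff_ne_zero.mpr hA.det_pos.ne'
  have h1Au : IsUnit (1 + A).det := isUnit_iff_ne_zero.mpr (PosDef.one.add hA).det_pos.ne'
  have hAA : (A * A).PosSemidef := by
    simpa only [hA.1.eq] using posSemidef_conjTranspose_mul_self A
  have hdiff : A⁻¹ - (1 + A)⁻¹ = ((1 + A) * A)⁻¹ := by
    rw [mul_inv_rev]
    calc A⁻¹ - (1 + A)⁻¹ = A⁻¹ * ((1 + A) - A) * (1 + A)⁻¹ := by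
          rw [mul_sub, sub_mul, nonsing_inv_mul _ hAu, one_mul,
            mul_nonsing_inv_cancel_right _ _ h1Au]
      _ = A⁻¹ * (1 + A)⁻¹ := by rw [add_sub_cancel_right, mul_one]
  rw [le_iff, hdiff, add_mul, one_mul]
  exact (hA.add_posSemidef hAA).inv.posSemidef

lemma inv_one_add_smul_le (hA : A.PosDef) {c : ℝ} (hc : 0 < c) :
    (1 + (c : 𝕜) • A)⁻¹ ≤ ((c⁻¹ : ℝ) : 𝕜) • A⁻¹ := by
  have hcA : ((c : 𝕜) • A).PosDef := hA.smul (RCLike.ofReal_pos.mpr hc)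
  have hinv : ((c : 𝕜) • A)⁻¹ = ((c⁻¹ : ℝ) : 𝕜) • A⁻¹ := by
    refine inv_eq_left_inv ?_
    rw [smul_mul_smul_comm, nonsing_inv_mul _ (isUnit_iff_ne_zero.mpr hA.det_pos.ne'),
      ← RCLike.ofReal_mul, inv_mul_cancel₀ hc.ne', RCLike.ofReal_one, one_smul]
  exact hinv ▸ hcA.inv_one_add_le_inv

end PosDef

lemma PosSemidef.logDet_one_add_smul_le (hA : A.PosSemidef) {c : ℝ} (hc : 1 ≤ c) :
    logDet (1 + (c : 𝕜) • A) ≤ Fintype.card n * Real.log c + logDet (1 + A) := by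
  have hc0 : 0 < c := one_pos.trans_le hc
  have hle : 1 + (c : 𝕜) • A ≤ (c : 𝕜) • (1 + A) := by
    rw [le_iff, show (c : 𝕜) • (1 + A) - (1 + (c : 𝕜) • A) = ((c - 1 : ℝ) : 𝕜) • 1 by
      push_cast; module]
    exact PosSemidef.one.smul (RCLike.ofReal_nonneg.mpr (sub_nonneg.mpr hc))
  exact (PosDef.one.add_posSemidef (hA.smul (RCLike.ofReal_nonneg.mpr hc0.le))).logDet_mono hle
    |>.trans_eq ((PosDef.one.add_posSemidef hA).logDet_ofReal_smul hc0)

end LogDet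

lemma linearMap_apply_eq_sum [Fintype m] [Fintype n] [DecidableEq m] [DecidableEq n]
    (L : Matrix m n 𝕜 →ₗ[𝕜] 𝕜) (A : Matrix m n 𝕜) :
    L A = ∑ i, ∑ j, A i j * L (single i j 1) := by
  have hsingle (i : m) (j : n) : single i j (A i j) = A i j • single i j 1 := by
    rw [smul_single, smul_eq_mul, mul_one]
  conv_lhs => rw [matrix_eq_sum_single A]
  simp only [map_sum, hsingle, map_smul, smul_eq_mul]

def dotProductMulVecLin [Fintype m] [Fintype n] (x : m → 𝕜) (y : n → 𝕜) :
    Matrix m n 𝕜 →ₗ[𝕜] 𝕜 where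
  toFun A := x ⬝ᵥ A *ᵥ y
  map_add' A B := by simp only [add_mulVec, dotProduct_add]
  map_smul' c A := by simp only [smul_mulVec, dotProduct_smul, RingHom.id_apply]

section Integral

variable [MeasurableSpace Ω] {μ : Measure Ω}

/-- `E = ∫ M ∂μ`, taken entrywise since matrices carry no global norm. -/
def HasMatrixIntegral (μ : Measure Ω) (M : Ω → Matrix m n 𝕜) (E : Matrix m n 𝕜) : Prop :=
  ∀ i j, Integrable (fun ω => M ω i j) μ ∧ ∫ ω, M ω i j ∂μ = E i j

namespace HasMatrixIntegral

section Rectangular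

variable {M N : Ω → Matrix m n 𝕜} {E F : Matrix m n 𝕜}

lemma sub (hM : HasMatrixIntegral μ M E) (hN : HasMatrixIntegral μ N F) :
    HasMatrixIntegral μ (fun ω => M ω - N ω) (E - F) := fun i j =>
  ⟨(hM i j).1.sub (hN i j).1,
    by simp [integral_sub (hM i j).1 (hN i j).1, (hM i j).2, (hN i j).2]⟩

lemma const_smul (h : HasMatrixIntegral μ M E) (c : 𝕜) :
    HasMatrixIntegral μ (fun ω => c • M ω) (c • E) := fun i j =>
  ⟨(h i j).1.const_mul c, by simp [integral_const_mul, (h i j).2]⟩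

lemma const_add [IsProbabilityMeasure μ] (h : HasMatrixIntegral μ M E) (C : Matrix m n 𝕜) :
    HasMatrixIntegral μ (fun ω => C + M ω) (C + E) := fun i j =>
  ⟨(integrable_const _).add (h i j).1,
    by simp [integral_add (integrable_const _) (h i j).1, (h i j).2]⟩

variable [Fintype m] [Fintype n]

lemma integrable_linearMap (h : HasMatrixIntegral μ M E) (L : Matrix m n 𝕜 →ₗ[𝕜] 𝕜) :
    Integrable (fun ω => L (M ω)) μ := by
  classical
  simp only [linearMap_apply_eq_sum L (M _)]
  exact integrable_finsetSum _ fun i _ => integrable_finsetSum _ fun j _ =>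
    (h i j).1.mul_const _

lemma integral_linearMap (h : HasMatrixIntegral μ M E) (L : Matrix m n 𝕜 →ₗ[𝕜] 𝕜) :
    ∫ ω, L (M ω) ∂μ = L E := by
  classical
  simp only [linearMap_apply_eq_sum L (M _), linearMap_apply_eq_sum L E]
  rw [integral_finsetSum _ fun i _ => integrable_finsetSum _ fun j _ => (h i j).1.mul_const _]
  refine Finset.sum_congr rfl fun i _ => ?_
  rw [integral_finsetSum _ fun j _ => (h i j).1.mul_const _]
  simp_rw [integral_mul_const, (h _ _).2]

lemma integral_re_linearMap (h : HasMatrixIntegral μ M E) (L : Matrix m n 𝕜 →ₗ[𝕜] 𝕜) :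
    ∫ ω, RCLike.re (L (M ω)) ∂μ = RCLike.re (L E) := by
  rw [integral_re (h.integrable_linearMap L), h.integral_linearMap L]

end Rectangular

variable {M N : Ω → Matrix n n 𝕜} {E F : Matrix n n 𝕜}

lemma isHermitian (h : HasMatrixIntegral μ M E) (hM : ∀ ω, (M ω).IsHermitian) :
    E.IsHermitian := by
  ext i j
  rw [conjTranspose_apply, ← (h i j).2, ← (h j i).2, RCLike.star_def, ← integral_conj]
  exact integral_congr_ae (.of_forall fun ω => by simpa using congrFun₂ (hM ω) i j)

variable [Fintype n]

lemma posSemidef (h : HasMatrixIntegral μ M E) (hM : ∀ ω, (M ω).PosSemidef) : E.PosSemidef := by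
  have hE := h.isHermitian fun ω => (hM ω).1
  refine .of_dotProduct_mulVec_nonneg hE fun x =>
    RCLike.nonneg_iff.mpr ⟨?_, hE.im_star_dotProduct_mulVec_self x⟩
  change 0 ≤ RCLike.re (dotProductMulVecLin (star x) x E)
  rw [← h.integral_re_linearMap]
  exact integral_nonneg fun ω => (hM ω).re_dotProduct_nonneg x

lemma posDef [IsProbabilityMeasure μ] (h : HasMatrixIntegral μ M E) (hM : ∀ ω, (M ω).PosDef) :
    E.PosDef := by
  have hE := h.isHermitian fun ω => (hM ω).1
  refine .of_dotProduct_mulVec_pos hE fun x hx =>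
    RCLike.pos_iff.mpr ⟨?_, hE.im_star_dotProduct_mulVec_self x⟩
  let L := dotProductMulVecLin (star x) x
  change 0 < RCLike.re (L E)
  have hpos (ω : Ω) : 0 < RCLike.re (L (M ω)) := (hM ω).re_dotProduct_pos hx
  rw [← h.integral_re_linearMap L, integral_pos_iff_support_of_nonneg (fun ω => (hpos ω).le)
    (h.integrable_linearMap L).re, Function.support_eq_univ fun ω => (hpos ω).ne']
  simp

lemma mono (hM : HasMatrixIntegral μ M E) (hN : HasMatrixIntegral μ N F)
    (hMN : ∀ ω, M ω ≤ N ω) : E ≤ F :=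
  (hN.sub hM).posSemidef hMN

lemma integral_logDet_le [DecidableEq n] [IsProbabilityMeasure μ] (h : HasMatrixIntegral μ M E)
    (hM : ∀ ω, (M ω).PosDef) (hlog : Integrable (fun ω => logDet (M ω)) μ) :
    ∫ ω, logDet (M ω) ∂μ ≤ logDet E := by
  have hE := h.posDef hM
  let L := traceLinearMap n 𝕜 𝕜 ∘ₗ LinearMap.mulLeft 𝕜 E⁻¹
  have hLE : L E = Fintype.card n := by
    change (E⁻¹ * E).trace = _
    rw [nonsing_inv_mul _ (isUnit_iff_ne_zero.mpr hE.det_pos.ne'), trace_one]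
  have htangent (ω : Ω) :
      logDet (M ω) ≤ logDet E + RCLike.re (L (M ω)) - Fintype.card n :=
    (hM ω).logDet_le_logDet_add_re_trace_inv_mul_sub_card hE
  have hL : Integrable (fun ω => RCLike.re (L (M ω))) μ := (h.integrable_linearMap L).re
  calc ∫ ω, logDet (M ω) ∂μ
      ≤ ∫ ω, (logDet E + RCLike.re (L (M ω)) - Fintype.card n) ∂μ :=
        integral_mono hlog (by fun_prop) htangent
    _ = logDet E := by
        rw [integral_sub (by fun_prop) (by fun_prop), integral_add (by fun_prop) hL,
          h.integral_re_linearMap, hLE]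
        simp

end HasMatrixIntegral

end Integral

end Matrix

/-- MIMO gap bound: for a random Hermitian positive definite matrix `W` with finite
`E[W]` and `E[W⁻¹]`, and `ρ ≥ 1`, the gap
`G = E[log₂ det(I+ρW)] + log₂ det E[(I+ρW)⁻¹]` satisfies
`G ≤ log₂ det((I + E[W]) E[W⁻¹])`. -/
theorem mimo_gap_bound {Ω : Type*} [MeasurableSpace Ω] (μ : Measure Ω) [IsProbabilityMeasure μ]
    {n : ℕ} (W : Ω → Matrix (Fin n) (Fin n) ℂ) (ρ : ℝ) (hρ : 1 ≤ ρ)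
    (hPD : ∀ ω, (W ω).PosDef)
    (hIntW : ∀ i j, Integrable (fun ω => (W ω) i j) μ)
    (hIntWinv : ∀ i j, Integrable (fun ω => ((W ω)⁻¹) i j) μ)
    (hIntinv : ∀ i j, Integrable (fun ω => ((1 + (ρ : ℂ) • W ω)⁻¹) i j) μ)
    (hIntlog : Integrable (fun ω => Real.logb 2 ((1 + (ρ : ℂ) • W ω).det.re)) μ)
    (EW EWinv Einv : Matrix (Fin n) (Fin n) ℂ)
    (hEW : ∀ i j, EW i j = ∫ ω, (W ω) i j ∂μ)
    (hEWinv : ∀ i j, EWinv i j = ∫ ω, ((W ω)⁻¹) i j ∂μ)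
    (hEinv : ∀ i j, Einv i j = ∫ ω, ((1 + (ρ : ℂ) • W ω)⁻¹) i j ∂μ) :
    (∫ ω, Real.logb 2 ((1 + (ρ : ℂ) • W ω).det.re) ∂μ) + Real.logb 2 (Einv.det.re)
      ≤ Real.logb 2 (((1 + EW) * EWinv).det.re) := by
  have hρ0 : 0 < ρ := one_pos.trans_le hρ
  have hW : HasMatrixIntegral μ W EW := fun i j => ⟨hIntW i j, (hEW i j).symm⟩
  have hWinv : HasMatrixIntegral μ (fun ω => (W ω)⁻¹) EWinv :=
    fun i j => ⟨hIntWinv i j, (hEWinv i j).symm⟩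
  have hInv : HasMatrixIntegral μ (fun ω => (1 + (ρ : ℂ) • W ω)⁻¹) Einv :=
    fun i j => ⟨hIntinv i j, (hEinv i j).symm⟩
  have hA : HasMatrixIntegral μ (fun ω => 1 + (ρ : ℂ) • W ω) (1 + (ρ : ℂ) • EW) :=
    (hW.const_smul _).const_add 1
  have hAPD (ω : Ω) : (1 + (ρ : ℂ) • W ω).PosDef :=
    PosDef.one.add ((hPD ω).smul (Complex.zero_lt_real.mpr hρ0))
  have hEWPD : (1 + EW).PosDef := PosDef.one.add (hW.posDef hPD)
  have hEWinvPD : EWinv.PosDef := hWinv.posDef fun ω => (hPD ω).inv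
  have hlog : Integrable (fun ω => logDet (1 + (ρ : ℂ) • W ω)) μ := by
    simpa [logDet, Real.logb, div_mul_cancel₀ _ (Real.log_pos one_lt_two).ne']
      using hIntlog.mul_const (Real.log 2)
  have hJensen : ∫ ω, logDet (1 + (ρ : ℂ) • W ω) ∂μ ≤ logDet (1 + (ρ : ℂ) • EW) :=
    hA.integral_logDet_le hAPD hlog
  have hMean : logDet (1 + (ρ : ℂ) • EW) ≤ n * Real.log ρ + logDet (1 + EW) := by
    simpa using (hW.posDef hPD).posSemidef.logDet_one_add_smul_le hρ
  have hHarmonic : logDet Einv ≤ -(n * Real.log ρ) + logDet EWinv := by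
    have hle := hInv.mono (hWinv.const_smul _) fun ω => (hPD ω).inv_one_add_smul_le hρ0
    simpa using (hInv.posDef fun ω => (hAPD ω).inv).logDet_mono hle
      |>.trans_eq (hEWinvPD.logDet_ofReal_smul (inv_pos.mpr hρ0))
  have key : ∫ ω, logDet (1 + (ρ : ℂ) • W ω) ∂μ + logDet Einv ≤ logDet ((1 + EW) * EWinv) := by
    rw [hEWPD.logDet_mul hEWinvPD]
    linarith
  simp only [Real.logb, integral_div, ← add_div]
  exact div_le_div_of_nonneg_right key (Real.log_pos one_lt_two).le
end

section
/- Let h₁, h₂ be independent nonnegative random variables with E[h₁] = E[h₂] = 1 and E[h₁²] = E[h₂²] < ∞, and let 0 < ρ < 1/2. Then E[log₂(1 + ρh₁ + ρh₂)] + log₂(E[(1+ρh₁)/(1+ρh₁+ρh₂)] · E[1/(1+ρh₁)]) ≤ (log₂ e)(1 + 2E[h₁²]) ρ². -/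
/-!
Every logarithm is bounded by `ln x ≤ x - 1`. This gives `E[ln(1 + ρh₁ + ρh₂)] ≤ 2ρ`, while the
pointwise bounds `1/(1+x) ≤ 1 - x + x²` and `(1+a)/(1+a+b) ≤ 1 - b + ab + b²` (for `a, b, x ≥ 0`),
together with `E[h₁h₂] = 1` from independence, give `ln E[(1+ρh₁)/(1+ρh₁+ρh₂)] ≤ -ρ + ρ² + ρ²E[h₂²]`
and `ln E[1/(1+ρh₁)] ≤ -ρ + ρ²E[h₁²]`. The first-order terms cancel, leaving `(1 + 2E[h₁²])ρ²`.
-/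

open Real MeasureTheory

lemma one_div_one_add_le {x : ℝ} (hx : 0 ≤ x) : 1 / (1 + x) ≤ 1 - x + x ^ 2 := by
  rw [div_le_iff₀ (by positivity)]
  nlinarith [pow_nonneg hx 3]

lemma div_one_add_add_le {a b : ℝ} (ha : 0 ≤ a) (hb : 0 ≤ b) :
    (1 + a) / (1 + a + b) ≤ 1 - b + a * b + b ^ 2 := by
  rw [div_le_iff₀ (by positivity)]
  nlinarith [mul_nonneg hb (sq_nonneg (a + b))]

section

variable {Ω : Type*} [MeasurableSpace Ω] {μ : Measure Ω}

lemma integral_pos_of_pos [NeZero μ] {f : Ω → ℝ} (hf : ∀ ω, 0 < f ω) (hfi : Integrable f μ) :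
    0 < ∫ ω, f ω ∂μ := by
  have hsupp : Function.support f = Set.univ := Set.eq_univ_of_forall fun ω ↦ (hf ω).ne'
  rw [integral_pos_iff_support_of_nonneg (fun ω ↦ (hf ω).le) hfi, hsupp]
  exact Measure.measure_univ_pos.mpr (NeZero.ne μ)

lemma integral_log_one_add_mul_add_mul_le {X Y : Ω → ℝ} {ρ : ℝ} (hρ : 0 ≤ ρ)
    (hX : ∀ ω, 0 ≤ X ω) (hY : ∀ ω, 0 ≤ Y ω) (hXi : Integrable X μ) (hYi : Integrable Y μ)
    (hlog : Integrable (fun ω ↦ log (1 + ρ * X ω + ρ * Y ω)) μ) :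
    ∫ ω, log (1 + ρ * X ω + ρ * Y ω) ∂μ ≤ ρ * ∫ ω, X ω ∂μ + ρ * ∫ ω, Y ω ∂μ := by
  calc _ ≤ ∫ ω, (ρ * X ω + ρ * Y ω) ∂μ :=
        integral_mono hlog ((hXi.const_mul ρ).add (hYi.const_mul ρ)) fun ω ↦ by
          have hpos : 0 < 1 + ρ * X ω + ρ * Y ω := by
            have := hX ω; have := hY ω; positivity
          linarith [log_le_sub_one_of_pos hpos]
    _ = _ := by
      rw [integral_add (hXi.const_mul ρ) (hYi.const_mul ρ), integral_const_mul,
        integral_const_mul]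

variable [IsProbabilityMeasure μ]

lemma integral_one_div_one_add_le {X : Ω → ℝ} {ρ : ℝ} (hρ : 0 ≤ ρ) (hX : ∀ ω, 0 ≤ X ω)
    (hXi : Integrable X μ) (hX2 : Integrable (fun ω ↦ X ω ^ 2) μ)
    (hi : Integrable (fun ω ↦ 1 / (1 + ρ * X ω)) μ) :
    ∫ ω, 1 / (1 + ρ * X ω) ∂μ ≤ 1 - ρ * ∫ ω, X ω ∂μ + ρ ^ 2 * ∫ ω, X ω ^ 2 ∂μ := by
  have h1 : Integrable (fun ω ↦ 1 - ρ * X ω) μ := (integrable_const 1).sub (hXi.const_mul ρ)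
  have h2 : Integrable (fun ω ↦ ρ ^ 2 * X ω ^ 2) μ := hX2.const_mul _
  calc _ ≤ ∫ ω, (1 - ρ * X ω + ρ ^ 2 * X ω ^ 2) ∂μ :=
        integral_mono hi (h1.add h2) fun ω ↦ by
          simpa only [mul_pow] using one_div_one_add_le (mul_nonneg hρ (hX ω))
    _ = _ := by
      rw [integral_add h1 h2, integral_sub (integrable_const 1) (hXi.const_mul ρ),
        integral_const_mul, integral_const_mul]
      simp

lemma integral_div_one_add_add_le {X Y : Ω → ℝ} {ρ : ℝ} (hρ : 0 ≤ ρ) (hX : ∀ ω, 0 ≤ X ω)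
    (hY : ∀ ω, 0 ≤ Y ω) (hYi : Integrable Y μ) (hXY : Integrable (fun ω ↦ X ω * Y ω) μ)
    (hY2 : Integrable (fun ω ↦ Y ω ^ 2) μ)
    (hi : Integrable (fun ω ↦ (1 + ρ * X ω) / (1 + ρ * X ω + ρ * Y ω)) μ) :
    ∫ ω, (1 + ρ * X ω) / (1 + ρ * X ω + ρ * Y ω) ∂μ
      ≤ 1 - ρ * ∫ ω, Y ω ∂μ + ρ ^ 2 * ∫ ω, X ω * Y ω ∂μ + ρ ^ 2 * ∫ ω, Y ω ^ 2 ∂μ := by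
  have h1 : Integrable (fun ω ↦ 1 - ρ * Y ω) μ := (integrable_const 1).sub (hYi.const_mul ρ)
  have h2 : Integrable (fun ω ↦ ρ ^ 2 * (X ω * Y ω)) μ := hXY.const_mul _
  have h12 : Integrable (fun ω ↦ 1 - ρ * Y ω + ρ ^ 2 * (X ω * Y ω)) μ := h1.add h2
  have h3 : Integrable (fun ω ↦ ρ ^ 2 * Y ω ^ 2) μ := hY2.const_mul _
  calc _ ≤ ∫ ω, (1 - ρ * Y ω + ρ ^ 2 * (X ω * Y ω) + ρ ^ 2 * Y ω ^ 2) ∂μ :=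
        integral_mono hi (h12.add h3) fun ω ↦ by
          have := div_one_add_add_le (mul_nonneg hρ (hX ω)) (mul_nonneg hρ (hY ω))
          ring_nf at this ⊢
          exact this
    _ = _ := by
      rw [integral_add h12 h3, integral_add h1 h2,
        integral_sub (integrable_const 1) (hYi.const_mul ρ),
        integral_const_mul, integral_const_mul, integral_const_mul]
      simp

end

theorem mac_low_snr_gap_general {Ω : Type*} [MeasurableSpace Ω] (μ : Measure Ω) [IsProbabilityMeasure μ]
    (h₁ h₂ : Ω → ℝ) (hpos₁ : ∀ ω, 0 ≤ h₁ ω) (hpos₂ : ∀ ω, 0 ≤ h₂ ω)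
    (hindep : ProbabilityTheory.IndepFun h₁ h₂ μ)
    (hInt₁ : Integrable h₁ μ) (hInt₂ : Integrable h₂ μ)
    (hmean₁ : (∫ ω, h₁ ω ∂μ) = 1) (hmean₂ : (∫ ω, h₂ ω ∂μ) = 1)
    (hIntsq₁ : Integrable (fun ω => (h₁ ω) ^ 2) μ)
    (hIntsq₂ : Integrable (fun ω => (h₂ ω) ^ 2) μ)
    (hsqeq : (∫ ω, (h₁ ω) ^ 2 ∂μ) = ∫ ω, (h₂ ω) ^ 2 ∂μ)
    (ρ : ℝ) (hρ0 : 0 < ρ)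
    (hIntlog : Integrable (fun ω => Real.logb 2 (1 + ρ * h₁ ω + ρ * h₂ ω)) μ)
    (hIntratio : Integrable (fun ω => (1 + ρ * h₁ ω) / (1 + ρ * h₁ ω + ρ * h₂ ω)) μ)
    (hIntinv : Integrable (fun ω => 1 / (1 + ρ * h₁ ω)) μ) :
    (∫ ω, Real.logb 2 (1 + ρ * h₁ ω + ρ * h₂ ω) ∂μ)
        + Real.logb 2 ((∫ ω, (1 + ρ * h₁ ω) / (1 + ρ * h₁ ω + ρ * h₂ ω) ∂μ)
            * ∫ ω, 1 / (1 + ρ * h₁ ω) ∂μ)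
      ≤ Real.logb 2 (Real.exp 1) * (1 + 2 * ∫ ω, (h₁ ω) ^ 2 ∂μ) * ρ ^ 2 := by
  have hA : ∀ ω, 0 < 1 + ρ * h₁ ω := fun ω ↦ by have := hpos₁ ω; positivity
  have hS : ∀ ω, 0 < 1 + ρ * h₁ ω + ρ * h₂ ω := fun ω ↦ by
    have := hpos₁ ω; have := hpos₂ ω; positivity
  have hmul : ∫ ω, h₁ ω * h₂ ω ∂μ = 1 := by
    simpa [hmean₁, hmean₂] using hindep.integral_mul_eq_mul_integral hInt₁.1 hInt₂.1
  have hlog_int : Integrable (fun ω ↦ log (1 + ρ * h₁ ω + ρ * h₂ ω)) μ := by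
    simpa [logb, div_mul_cancel₀ _ (log_pos one_lt_two).ne'] using hIntlog.mul_const (log 2)
  set P := ∫ ω, (1 + ρ * h₁ ω) / (1 + ρ * h₁ ω + ρ * h₂ ω) ∂μ
  set Q := ∫ ω, 1 / (1 + ρ * h₁ ω) ∂μ
  have hP_pos : 0 < P := integral_pos_of_pos (fun ω ↦ div_pos (hA ω) (hS ω)) hIntratio
  have hQ_pos : 0 < Q := integral_pos_of_pos (fun ω ↦ one_div_pos.mpr (hA ω)) hIntinv
  have hL := integral_log_one_add_mul_add_mul_le hρ0.le hpos₁ hpos₂ hInt₁ hInt₂ hlog_int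
  have hP := integral_div_one_add_add_le hρ0.le hpos₁ hpos₂ hInt₂
    (hindep.integrable_mul hInt₁ hInt₂) hIntsq₂ hIntratio
  have hQ := integral_one_div_one_add_le hρ0.le hpos₁ hInt₁ hIntsq₁ hIntinv
  rw [hmean₁, hmean₂] at hL
  rw [hmean₂, hmul, ← hsqeq] at hP
  rw [hmean₁] at hQ
  calc _ = ((∫ ω, log (1 + ρ * h₁ ω + ρ * h₂ ω) ∂μ) + (log P + log Q)) / log 2 := by
        rw [← log_mul hP_pos.ne' hQ_pos.ne']; simp only [logb, integral_div]; ring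
    _ ≤ ((1 + 2 * ∫ ω, (h₁ ω) ^ 2 ∂μ) * ρ ^ 2) / log 2 := by
        gcongr
        linarith [log_le_sub_one_of_pos hP_pos, log_le_sub_one_of_pos hQ_pos]
    _ = _ := by rw [logb, log_exp]; ring

/-- Two-user MAC low-SNR gap bound: for independent nonnegative `h₁, h₂` with unit
means and equal finite second moments, and `0 < ρ < 1/2`,
`E[log₂(1+ρh₁+ρh₂)] + log₂(E[(1+ρh₁)/(1+ρh₁+ρh₂)] E[1/(1+ρh₁)]) ≤ (log₂ e)(1+2E[h₁²])ρ²`. -/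
theorem mac_low_snr_gap {Ω : Type*} [MeasurableSpace Ω] (μ : Measure Ω) [IsProbabilityMeasure μ]
    (h₁ h₂ : Ω → ℝ) (hpos₁ : ∀ ω, 0 ≤ h₁ ω) (hpos₂ : ∀ ω, 0 ≤ h₂ ω)
    (hindep : ProbabilityTheory.IndepFun h₁ h₂ μ)
    (hInt₁ : Integrable h₁ μ) (hInt₂ : Integrable h₂ μ)
    (hmean₁ : (∫ ω, h₁ ω ∂μ) = 1) (hmean₂ : (∫ ω, h₂ ω ∂μ) = 1)
    (hIntsq₁ : Integrable (fun ω => (h₁ ω) ^ 2) μ)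
    (hIntsq₂ : Integrable (fun ω => (h₂ ω) ^ 2) μ)
    (hsqeq : (∫ ω, (h₁ ω) ^ 2 ∂μ) = ∫ ω, (h₂ ω) ^ 2 ∂μ)
    (ρ : ℝ) (hρ0 : 0 < ρ) (hρ : ρ < 1 / 2)
    (hIntlog : Integrable (fun ω => Real.logb 2 (1 + ρ * h₁ ω + ρ * h₂ ω)) μ)
    (hIntratio : Integrable (fun ω => (1 + ρ * h₁ ω) / (1 + ρ * h₁ ω + ρ * h₂ ω)) μ)
    (hIntinv : Integrable (fun ω => 1 / (1 + ρ * h₁ ω)) μ) :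
    (∫ ω, Real.logb 2 (1 + ρ * h₁ ω + ρ * h₂ ω) ∂μ)
        + Real.logb 2 ((∫ ω, (1 + ρ * h₁ ω) / (1 + ρ * h₁ ω + ρ * h₂ ω) ∂μ)
            * ∫ ω, 1 / (1 + ρ * h₁ ω) ∂μ)
      ≤ Real.logb 2 (Real.exp 1) * (1 + 2 * ∫ ω, (h₁ ω) ^ 2 ∂μ) * ρ ^ 2 :=
  mac_low_snr_gap_general μ h₁ h₂ hpos₁ hpos₂ hindep hInt₁ hInt₂ hmean₁ hmean₂ hIntsq₁ hIntsq₂ hsqeq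
    ρ hρ0 hIntlog hIntratio hIntinv
end
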